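/- arXiv:math/0510223 — 7 statements merged into one kernel-verified Lean document; each statement's English description precedes it below -/
import Mathlib

section
/- If A and B are normal subgroups of a group G, then for every natural number i ≥ 1, the commutator subgroup [A, γ_i(B)] is contained in the left-normed commutator subgroup [A, B, ..., B] with i-1 copies of B (equivalently, [A, γ_{i+1}(B)] ≤ [A, B, ..., B] with i copies of B). -/
/-- Left-normed iterated commutator: `leftNormedComm A B 0 = A`,
`leftNormedComm A B (n+1) = ⁅leftNormedComm A B n, B⁆`. -/
def leftNormedComm {G : Type*} [Group G] (A B : Subgroup G) : ℕ → Subgroup G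
  | 0 => A
  | n + 1 => ⁅leftNormedComm A B n, B⁆

lemma leftNormedComm_normal {G : Type*} [Group G] (A B : Subgroup G)
    (hA : A.Normal) (hB : B.Normal) : ∀ n, (leftNormedComm A B n).Normal
  | 0 => hA
  | n + 1 => by
    haveI := leftNormedComm_normal A B hA hB n
    haveI := hB
    exact Subgroup.commutator_normal _ _

lemma leftNormedComm_shift {G : Type*} [Group G] (A B : Subgroup G) :
    ∀ n, leftNormedComm ⁅A, B⁆ B n = leftNormedComm A B (n + 1)
  | 0 => rfl
  | n + 1 => by
    show ⁅leftNormedComm ⁅A, B⁆ B n, B⁆ = ⁅leftNormedComm A B (n + 1), B⁆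
    rw [leftNormedComm_shift A B n]

/-- Three subgroups lemma, normal subgroup version. -/
lemma three_subgroups_normal {G : Type*} [Group G] (X Y Z : Subgroup G)
    (hX : X.Normal) (hY : Y.Normal) (hZ : Z.Normal) :
    ⁅⁅Y, Z⁆, X⁆ ≤ ⁅⁅Z, X⁆, Y⁆ ⊔ ⁅⁅X, Y⁆, Z⁆ := by
  haveI := hX; haveI := hY; haveI := hZ
  set N : Subgroup G := ⁅⁅Z, X⁆, Y⁆ ⊔ ⁅⁅X, Y⁆, Z⁆ with hN
  haveI : N.Normal := Subgroup.sup_normal _ _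
  let f := QuotientGroup.mk' N
  have hker : (f : G →* G ⧸ N).ker = N := QuotientGroup.ker_mk' N
  rw [← hker, ← Subgroup.map_eq_bot_iff]
  rw [Subgroup.map_commutator, Subgroup.map_commutator]
  apply Subgroup.commutator_commutator_eq_bot_of_rotate
  · rw [← Subgroup.map_commutator, ← Subgroup.map_commutator, Subgroup.map_eq_bot_iff, hker]
    exact le_sup_left
  · rw [← Subgroup.map_commutator, ← Subgroup.map_commutator, Subgroup.map_eq_bot_iff, hker]
    exact le_sup_right

lemma key_step {G : Type*} [Group G] (B : Subgroup G) (hB : B.Normal) :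
    ∀ n : ℕ, ∀ A : Subgroup G, A.Normal →
      ⁅A, leftNormedComm B B n⁆ ≤ leftNormedComm A B n := by
  intro n
  induction n with
  | zero => intro A hA; haveI := hA; exact Subgroup.commutator_le_left A B
  | succ n ih =>
    intro A hA
    haveI := hA; haveI := hB
    haveI hγ : (leftNormedComm B B n).Normal := leftNormedComm_normal B B hB hB n
    have h1 : ⁅A, leftNormedComm B B (n + 1)⁆
        = ⁅⁅leftNormedComm B B n, B⁆, A⁆ := Subgroup.commutator_comm _ _
    rw [h1]
    have h2 := three_subgroups_normal A (leftNormedComm B B n) B hA hγ hB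
    refine h2.trans (sup_le ?_ ?_)
    · -- ⁅⁅B, A⁆, leftNormedComm B B n⁆ ≤ leftNormedComm A B (n+1)
      rw [Subgroup.commutator_comm B A]
      haveI : (⁅A, B⁆ : Subgroup G).Normal := Subgroup.commutator_normal A B
      calc ⁅⁅A, B⁆, leftNormedComm B B n⁆ ≤ leftNormedComm ⁅A, B⁆ B n :=
            ih ⁅A, B⁆ this
        _ = leftNormedComm A B (n + 1) := leftNormedComm_shift A B n
    · -- ⁅⁅A, leftNormedComm B B n⁆, B⁆ ≤ ⁅leftNormedComm A B n, B⁆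
      exact Subgroup.commutator_mono (ih A hA) le_rfl

/-- If `A` and `B` are normal subgroups of a group `G`, then for every `i ≥ 1`,
`⁅A, γ_i(B)⁆ ≤ [A, B, …, B]` with `i - 1` copies of `B`, where
`γ_i(B) = leftNormedComm B B (i-1)` is the `i`-th lower central series term of `B`. -/
theorem commutator_lowerCentral_le_leftNormedComm {G : Type*} [Group G]
    (A B : Subgroup G) (hA : A.Normal) (hB : B.Normal) :
    ∀ i : ℕ, 1 ≤ i → ⁅A, leftNormedComm B B (i - 1)⁆ ≤ leftNormedComm A B (i - 1) := by
  intro i _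
  exact key_step B hB (i - 1) A hA
end

section
/- Let G be a finite p-group and H a non-abelian normal subgroup of G contained in γ_i(G). Then |H| ≥ p^{i+2}. -/
/-!
By the three-subgroup lemma, `[γ_{k+1}(G), Z_{n+k+1}(G)] ≤ Z_n(G)`; in particular `γ_i(G)`
commutes with `Z_i(G)`, so `H ∩ Z_i(G)` lies in the center of `H`. As `H` is non-abelian it is not
contained in `Z_{i-1}(G)`, and a normal subgroup of a `p`-group not contained in `Z_n` meets
`Z_{n+1} \ Z_n` (it meets the center of `G / Z_n`). Hence `H ∩ Z_0 < ⋯ < H ∩ Z_i` and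
`|Z(H)| ≥ p^i`. Finally `H / Z(H)` is not cyclic, so `|H : Z(H)| ≥ p^2`.
-/

namespace Subgroup

variable {G : Type*} [Group G]

theorem commutator_commutator_le_of_rotate {H₁ H₂ H₃ N : Subgroup G} [N.Normal]
    (h₁ : ⁅⁅H₂, H₃⁆, H₁⁆ ≤ N) (h₂ : ⁅⁅H₃, H₁⁆, H₂⁆ ≤ N) : ⁅⁅H₁, H₂⁆, H₃⁆ ≤ N := by
  simp only [← QuotientGroup.ker_mk' N, ← map_eq_bot_iff, map_commutator] at *
  exact commutator_commutator_eq_bot_of_rotate h₁ h₂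

theorem commutator_lowerCentralSeries_upperCentralSeries_le (k n : ℕ) :
    ⁅(⊤ : Subgroup G).lowerCentralSeries k, upperCentralSeries G (n + k + 1)⁆ ≤
      upperCentralSeries G n := by
  induction k generalizing n with
  | zero => rw [commutator_comm]; exact commutator_upperCentralSeries_top_le G n
  | succ k ih =>
    apply commutator_commutator_le_of_rotate
    · calc ⁅⁅⊤, upperCentralSeries G (n + (k + 1) + 1)⁆, lowerCentralSeries ⊤ k⁆
            ≤ ⁅upperCentralSeries G (n + k + 1), lowerCentralSeries ⊤ k⁆ := by
              rw [commutator_comm ⊤]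
              exact commutator_mono (commutator_upperCentralSeries_top_le G _) le_rfl
          _ ≤ upperCentralSeries G n := by rw [commutator_comm]; exact ih n
    · calc ⁅⁅upperCentralSeries G (n + (k + 1) + 1), lowerCentralSeries ⊤ k⁆, ⊤⁆
            ≤ ⁅upperCentralSeries G (n + 1), ⊤⁆ := by
              refine commutator_mono ?_ le_rfl
              rw [commutator_comm, show n + (k + 1) + 1 = n + 1 + k + 1 by omega]
              exact ih (n + 1)
          _ ≤ upperCentralSeries G n := commutator_upperCentralSeries_top_le G n

theorem commutator_lowerCentralSeries_upperCentralSeries_eq_bot (k : ℕ) :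
    ⁅(⊤ : Subgroup G).lowerCentralSeries k, upperCentralSeries G (k + 1)⁆ = ⊥ := by
  simpa [le_bot_iff] using commutator_lowerCentralSeries_upperCentralSeries_le (G := G) k 0

theorem mem_upperCentralSeries_succ_iff_mk_mem_center {n : ℕ} {x : G} :
    x ∈ upperCentralSeries G (n + 1) ↔
      (x : G ⧸ upperCentralSeries G n) ∈ center (G ⧸ upperCentralSeries G n) :=
  SetLike.ext_iff.mp (upperCentralSeriesStep_eq_comap_center (upperCentralSeries G n)) x

theorem card_inf_le_card_center {H K : Subgroup G} [Finite H] (h : ⁅H, K⁆ = ⊥) :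
    Nat.card ↥(H ⊓ K) ≤ Nat.card (center H) := by
  rw [← Nat.card_congr (subgroupOfEquivOfLe (inf_le_left : H ⊓ K ≤ H)).toEquiv]
  refine card_le_of_le fun x hx ↦ mem_center_iff.mpr fun y ↦ Subtype.ext ?_
  exact (commutator_eq_bot_iff_le_centralizer.mp h y.2 x (mem_inf.mp hx).2).symm

end Subgroup

namespace IsPGroup

open Subgroup

variable {p : ℕ} [hp : Fact p.Prime] {G : Type*} [Group G] [Finite G] (hG : IsPGroup p G)
include hG

theorem inf_center_ne_bot {N : Subgroup G} [N.Normal] (hN : N ≠ ⊥) : N ⊓ center G ≠ ⊥ := by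
  obtain ⟨n, hn, hcard⟩ :=
    (hG.to_subgroup N).nontrivial_iff_card.mp ((nontrivial_iff_ne_bot N).mpr hN)
  obtain ⟨b, hb, hb1⟩ :=
    (hG.of_equiv ConjAct.toConjAct).exists_fixed_point_of_prime_dvd_card_of_fixed_point (α := N)
      (hcard ▸ dvd_pow_self p hn.ne') (fun g ↦ smul_one g : (1 : N) ∈ _)
  refine ne_bot_iff_exists_ne_one.mpr ⟨⟨b, b.2, mem_center_iff.mpr fun g ↦ ?_⟩, ?_⟩
  · have hgb := congrArg Subtype.val (hb (ConjAct.toConjAct g))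
    rwa [ConjAct.Subgroup.val_conj_smul, ConjAct.smul_def, ConjAct.ofConjAct_toConjAct,
      mul_inv_eq_iff_eq_mul] at hgb
  · exact fun h ↦ hb1 (Subtype.ext (congrArg Subtype.val h).symm)

theorem mul_card_le_card_of_lt {K L : Subgroup G} (h : K < L) : p * Nat.card K ≤ Nat.card L := by
  obtain ⟨a, ha⟩ := iff_card.mp (hG.to_subgroup K)
  obtain ⟨b, hb⟩ := iff_card.mp (hG.to_subgroup L)
  have hlt : Nat.card K < Nat.card L :=
    (card_le_of_le h.le).lt_of_ne fun heq ↦ h.ne (eq_of_le_of_card_ge h.le heq.ge)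
  rw [ha, hb, ← pow_succ'] at *
  exact Nat.pow_le_pow_right hp.out.pos ((Nat.pow_lt_pow_iff_right hp.out.one_lt).mp hlt)

theorem inf_upperCentralSeries_lt_succ {N : Subgroup G} [N.Normal] {n : ℕ}
    (h : ¬N ≤ Subgroup.upperCentralSeries G n) :
    N ⊓ Subgroup.upperCentralSeries G n < N ⊓ Subgroup.upperCentralSeries G (n + 1) := by
  set Z := Subgroup.upperCentralSeries G n
  have hmap : N.map (QuotientGroup.mk' Z) ≠ ⊥ := by
    rwa [Ne, Subgroup.map_eq_bot_iff, QuotientGroup.ker_mk']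
  obtain ⟨⟨_, ⟨x, hxN, rfl⟩, hxc⟩, hx1⟩ :=
    ne_bot_iff_exists_ne_one.mp ((hG.to_quotient Z).inf_center_ne_bot hmap)
  refine SetLike.lt_iff_le_and_exists.mpr
    ⟨inf_le_inf_left N (Subgroup.upperCentralSeries_mono G n.le_succ), x,
      mem_inf.mpr ⟨hxN, mem_upperCentralSeries_succ_iff_mk_mem_center.mpr hxc⟩, fun hx ↦ hx1 ?_⟩
  exact Subtype.ext ((QuotientGroup.eq_one_iff x).mpr hx.2)

theorem pow_succ_le_card_inf_upperCentralSeries {N : Subgroup G} [N.Normal] {n : ℕ}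
    (h : ¬N ≤ Subgroup.upperCentralSeries G n) :
    p ^ (n + 1) ≤ Nat.card ↥(N ⊓ Subgroup.upperCentralSeries G (n + 1)) := by
  induction n with
  | zero => simpa using hG.mul_card_le_card_of_lt (hG.inf_upperCentralSeries_lt_succ h)
  | succ n ih =>
    have h' : ¬N ≤ Subgroup.upperCentralSeries G n :=
      fun hle ↦ h (hle.trans (Subgroup.upperCentralSeries_mono G n.le_succ))
    calc p ^ (n + 1 + 1) = p * p ^ (n + 1) := pow_succ' p (n + 1)
      _ ≤ p * Nat.card ↥(N ⊓ Subgroup.upperCentralSeries G (n + 1)) :=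
          Nat.mul_le_mul_left p (ih h')
      _ ≤ _ := hG.mul_card_le_card_of_lt (hG.inf_upperCentralSeries_lt_succ h)

theorem sq_le_index_center (h : ¬IsMulCommutative G) : p ^ 2 ≤ (center G).index := by
  obtain ⟨m, hm⟩ := iff_card.mp (hG.to_quotient (center G))
  rw [index_eq_card, hm]
  refine Nat.pow_le_pow_right hp.out.pos (not_lt.mp fun hm2 ↦ h ?_)
  have : IsCyclic (G ⧸ center G) :=
    isCyclic_of_card_dvd_prime (by simpa [hm] using pow_dvd_pow p (show m ≤ 1 by omega))
  exact isMulCommutative_of_isCyclic_quotient_center_self G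

end IsPGroup

/-- Hall: if `H` is a non-abelian normal subgroup of a finite `p`-group `G` with
`H ≤ γ_i(G)` (here `γ_i(G) = lowerCentralSeries G (i-1)`), then `|H| ≥ p^(i+2)`. -/
theorem hall_order_bound {p : ℕ} (hp : p.Prime) {G : Type*} [Group G]
    [Finite G] (hG : IsPGroup p G) (H : Subgroup G) (hN : H.Normal)
    (hnonab : ⁅H, H⁆ ≠ ⊥) (i : ℕ) (hi : 1 ≤ i) (hle : H ≤ (⊤ : Subgroup G).lowerCentralSeries (i - 1)) :
    p ^ (i + 2) ≤ Nat.card H := by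
  have := Fact.mk hp
  obtain ⟨j, rfl⟩ : ∃ j, i = j + 1 := ⟨i - 1, by omega⟩
  rw [Nat.add_sub_cancel] at hle
  have hcomm : ⁅H, Subgroup.upperCentralSeries G (j + 1)⁆ = ⊥ :=
    le_bot_iff.mp <| (Subgroup.commutator_mono hle le_rfl).trans
      (Subgroup.commutator_lowerCentralSeries_upperCentralSeries_eq_bot j).le
  have hnot : ¬H ≤ Subgroup.upperCentralSeries G j := fun h ↦ hnonab <| le_bot_iff.mp <|
    hcomm ▸ Subgroup.commutator_mono le_rfl (h.trans (Subgroup.upperCentralSeries_mono G j.le_succ))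
  calc p ^ (j + 1 + 2) = p ^ (j + 1) * p ^ 2 := pow_add p _ 2
    _ ≤ Nat.card ↥(H ⊓ Subgroup.upperCentralSeries G (j + 1)) * (Subgroup.center H).index :=
        Nat.mul_le_mul (hG.pow_succ_le_card_inf_upperCentralSeries hnot)
          ((hG.to_subgroup H).sq_le_index_center (by rwa [← Subgroup.commutator_self_eq_bot_iff]))
    _ ≤ Nat.card (Subgroup.center H) * (Subgroup.center H).index :=
        Nat.mul_le_mul_right _ (Subgroup.card_inf_le_card_center hcomm)
    _ = Nat.card H := (Subgroup.center H).card_mul_index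
end

section
/- If G is a group and H is a normal subgroup of G such that the quotient G/H is cyclic, then the derived subgroup of G equals the commutator subgroup [G,H], i.e. [G,G] = [G,H]. -/
/-!
Let `K = [G, H]`. In `G/K` the image of `H` commutes with everything, so it is a central subgroup
whose quotient is `G/H`, which is cyclic. A group that is cyclic modulo a central subgroup is
abelian, hence `G/K` is abelian, i.e. `[G, G] ≤ K`; the reverse inclusion is monotonicity.
-/

namespace Subgroup

variable {G Q : Type*} [Group G] [Group Q]

theorem map_le_center_of_commutator_le_ker {f : G →* Q} (hf : Function.Surjective f)
    {H : Subgroup G} (hH : ⁅H, ⊤⁆ ≤ f.ker) : H.map f ≤ center Q := by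
  rwa [← centralizer_univ, ← coe_top, ← commutator_eq_bot_iff_le_centralizer,
    ← map_top_of_surjective f hf, ← map_commutator, map_eq_bot_iff]

theorem isMulCommutative_quotient_of_isCyclic {N H : Subgroup G} [N.Normal] [H.Normal]
    [IsCyclic (G ⧸ H)] (hNH : N ≤ H) (hHN : ⁅(⊤ : Subgroup G), H⁆ ≤ N) :
    IsMulCommutative (G ⧸ N) := by
  apply (QuotientGroup.map N H (MonoidHom.id G) hNH).isMulCommutative_of_isCyclic_of_ker_le_center
  refine (QuotientGroup.ker_map ..).trans_le ?_
  rw [comap_id]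
  apply map_le_center_of_commutator_le_ker (QuotientGroup.mk'_surjective N)
  rwa [QuotientGroup.ker_mk', commutator_comm]

end Subgroup

/-- If `G/H` is cyclic for a normal subgroup `H` of `G`, then `[G,G] = [G,H]`. -/
theorem commutator_eq_commutator_normal_of_cyclic_quotient {G : Type*} [Group G]
    (H : Subgroup G) [H.Normal] (hcyc : IsCyclic (G ⧸ H)) :
    commutator G = ⁅(⊤ : Subgroup G), H⁆ := by
  have : IsMulCommutative (G ⧸ ⁅(⊤ : Subgroup G), H⁆) :=
    Subgroup.isMulCommutative_quotient_of_isCyclic (Subgroup.commutator_le_right ⊤ H) le_rfl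
  exact le_antisymm (Subgroup.Normal.quotient_commutative_iff_commutator_le.mp this)
    (Subgroup.commutator_mono le_rfl le_top)
end

section
/- Let G be a finite p-group and d ≥ 0 such that G^{(d+1)} ≠ 1. Then |G^{(d)} / G^{(d+1)}| ≥ p^{2^d + 1}. -/
/-!
Write `N = G^(d)` and `N_j = [N, G, …, G]` (`j` copies of `G`), and let `γ_1 = G`. By the three
subgroups lemma `[A, γ_{j+1}] ≤ [A, G, …, G]` (`j + 1` copies) for normal `A`; hence
`G^(d) ≤ γ_{2^d}` and `G^(d+1) = [N, N] ≤ N_{2^d}`. In a nilpotent group `N_{j+1} < N_j` as long as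
`N_j ≠ 1`, so in a `p`-group `|N : N_{2^d}| ≥ p^{2^d}`. The missing factor `p` comes either from
`|N : N_1| ≥ p²` or, if `|N : N_1| = p`, from `N = ⟨x⟩ N_1` with `N_1` central in `N` modulo
`N_{2^d+1}`, which forces `[N, N] ≤ N_{2^d+1}`.
-/

namespace Subgroup

variable {G : Type*} [Group G]

/-- `A.lcs n = [A, G, …, G]` with `n` copies of `G`; the group analogue of `LieSubmodule.lcs`. -/
def lcs (A : Subgroup G) : ℕ → Subgroup G
  | 0 => A
  | n + 1 => ⁅A.lcs n, ⊤⁆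

variable (A : Subgroup G)

@[simp] theorem lcs_zero : A.lcs 0 = A := rfl

theorem lcs_succ (n : ℕ) : A.lcs (n + 1) = ⁅A.lcs n, ⊤⁆ := rfl

instance lcs_normal [A.Normal] (n : ℕ) : (A.lcs n).Normal := by
  induction n with
  | zero => assumption
  | succ n _ => rw [lcs_succ]; infer_instance

theorem lcs_antitone [A.Normal] : Antitone A.lcs :=
  antitone_nat_of_succ_le fun _ => commutator_le_left _ _

theorem lcs_le_self [A.Normal] (n : ℕ) : A.lcs n ≤ A :=
  A.lcs_antitone n.zero_le

theorem lcs_lcs (i j : ℕ) : (A.lcs i).lcs j = A.lcs (i + j) := by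
  induction j with
  | zero => rfl
  | succ j ih => rw [lcs_succ, ih, ← Nat.add_assoc, lcs_succ]

theorem top_lcs (n : ℕ) : (⊤ : Subgroup G).lcs n = (⊤ : Subgroup G).lowerCentralSeries n := by
  induction n with
  | zero => rfl
  | succ n ih => rw [lcs_succ, ih, lowerCentralSeries_succ]

theorem le_iff_map_mk'_eq_bot {H T : Subgroup G} [T.Normal] :
    H ≤ T ↔ H.map (QuotientGroup.mk' T) = ⊥ := by
  rw [map_eq_bot_iff, QuotientGroup.ker_mk']

theorem commutator_commutator_le_of_rotate_s5 {H₁ H₂ H₃ T : Subgroup G} [T.Normal]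
    (h1 : ⁅⁅H₂, H₃⁆, H₁⁆ ≤ T) (h2 : ⁅⁅H₃, H₁⁆, H₂⁆ ≤ T) : ⁅⁅H₁, H₂⁆, H₃⁆ ≤ T := by
  simp only [le_iff_map_mk'_eq_bot, map_commutator] at h1 h2 ⊢
  exact commutator_commutator_eq_bot_of_rotate h1 h2

theorem commutator_lowerCentralSeries_le_lcs [A.Normal] (j : ℕ) :
    ⁅A, (⊤ : Subgroup G).lowerCentralSeries j⁆ ≤ A.lcs (j + 1) := by
  induction j generalizing A with
  | zero => rfl
  | succ j ih =>
    rw [lowerCentralSeries_succ, commutator_comm]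
    apply commutator_commutator_le_of_rotate_s5
    · rw [commutator_comm ⊤ A]
      have h := ih (A.lcs 1)
      rwa [lcs_lcs, Nat.add_comm 1] at h
    · exact commutator_mono (ih A) le_rfl

theorem commutator_le_lcs {N : Subgroup G} [N.Normal] {m : ℕ}
    (hN : N ≤ (⊤ : Subgroup G).lowerCentralSeries m) : ⁅N, N⁆ ≤ N.lcs (m + 1) :=
  (commutator_mono le_rfl hN).trans (N.commutator_lowerCentralSeries_le_lcs m)

theorem commutator_sup_eq_bot {A M : Subgroup G} (hA : ⁅A, A⁆ = ⊥) (hM : ⁅A ⊔ M, M⁆ = ⊥) :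
    ⁅A ⊔ M, A ⊔ M⁆ = ⊥ := by
  rw [commutator_eq_bot_iff_le_centralizer] at hA hM ⊢
  refine sup_le ?_ (le_centralizer_iff.mpr hM)
  exact le_centralizer_iff.mpr (sup_le hA (le_centralizer_iff.mp (le_sup_left.trans hM)))

theorem commutator_sup_le {A M T : Subgroup G} [T.Normal] (hA : ⁅A, A⁆ ≤ T)
    (hM : ⁅A ⊔ M, M⁆ ≤ T) : ⁅A ⊔ M, A ⊔ M⁆ ≤ T := by
  simp only [le_iff_map_mk'_eq_bot, map_commutator, map_sup] at hA hM ⊢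
  exact commutator_sup_eq_bot hA hM

theorem exists_zpowers_sup_eq_of_relIndex_prime {M N : Subgroup G} (hMN : M ≤ N)
    (hprime : (M.relIndex N).Prime) : ∃ x ∈ N, zpowers x ⊔ M = N := by
  obtain ⟨x, hxN, hxM⟩ := SetLike.not_le_iff_exists.mp (mt relIndex_eq_one.mpr hprime.ne_one)
  have hle : zpowers x ⊔ M ≤ N := sup_le (zpowers_le.mpr hxN) hMN
  have hlow : M.relIndex (zpowers x ⊔ M) ≠ 1 := fun h =>
    hxM (relIndex_eq_one.mp h (mem_sup_left (mem_zpowers x)))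
  rw [← relIndex_mul_relIndex M _ N le_sup_right hle, Nat.prime_mul_iff] at hprime
  exact ⟨x, hxN, le_antisymm hle (relIndex_eq_one.mp (hprime.resolve_right (hlow ·.2)).2)⟩

/-- Here `N = ⟨x⟩ (N.lcs 1)`, and `N.lcs 1` is central in `N` modulo `N.lcs (m + 2)`. -/
theorem commutator_le_lcs_of_relIndex_prime {N : Subgroup G} [N.Normal] {m : ℕ}
    (hN : N ≤ (⊤ : Subgroup G).lowerCentralSeries m) (hprime : ((N.lcs 1).relIndex N).Prime) :
    ⁅N, N⁆ ≤ N.lcs (m + 2) := by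
  obtain ⟨x, -, hx⟩ := exists_zpowers_sup_eq_of_relIndex_prime (N.lcs_le_self 1) hprime
  suffices h : ⁅zpowers x ⊔ N.lcs 1, zpowers x ⊔ N.lcs 1⁆ ≤ N.lcs (m + 2) by rwa [hx] at h
  apply commutator_sup_le
  · rw [commutator_eq_bot_iff_le_centralizer.mpr (le_centralizer _)]
    exact bot_le
  · rw [hx, commutator_comm]
    calc ⁅N.lcs 1, N⁆ ≤ ⁅N.lcs 1, (⊤ : Subgroup G).lowerCentralSeries m⁆ :=
          commutator_mono le_rfl hN
      _ ≤ (N.lcs 1).lcs (m + 1) := (N.lcs 1).commutator_lowerCentralSeries_le_lcs m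
      _ = N.lcs (m + 2) := by rw [lcs_lcs, Nat.add_comm]

theorem eq_bot_of_le_commutator_top [Group.IsNilpotent G] {H : Subgroup G} (h : H ≤ ⁅H, ⊤⁆) :
    H = ⊥ := by
  obtain ⟨n, hn⟩ := nilpotent_iff_lowerCentralSeries.mp ‹Group.IsNilpotent G›
  have hle : ∀ k, H ≤ (⊤ : Subgroup G).lowerCentralSeries k := by
    intro k
    induction k with
    | zero => exact le_top
    | succ k ih => exact h.trans (commutator_mono ih le_rfl)
  exact le_bot_iff.mp (hn ▸ hle n)

end Subgroup

open Subgroup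

theorem derivedSeries_le_lowerCentralSeries_two_pow_sub_one (G : Type*) [Group G] (d : ℕ) :
    derivedSeries G d ≤ (⊤ : Subgroup G).lowerCentralSeries (2 ^ d - 1) := by
  induction d with
  | zero => exact le_top
  | succ d ih =>
    have hm : 2 ^ d - 1 + (2 ^ d - 1 + 1) = 2 ^ (d + 1) - 1 := by
      have := Nat.one_le_two_pow (n := d)
      rw [pow_succ]
      omega
    calc derivedSeries G (d + 1) = ⁅derivedSeries G d, derivedSeries G d⁆ := derivedSeries_succ G d
      _ ≤ ((⊤ : Subgroup G).lowerCentralSeries (2 ^ d - 1)).lcs (2 ^ d - 1 + 1) :=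
        (commutator_mono ih ih).trans (commutator_lowerCentralSeries_le_lcs _ _)
      _ = _ := by rw [← top_lcs, lcs_lcs, hm, top_lcs]

namespace IsPGroup

variable {p : ℕ} [Fact p.Prime] {G : Type*} [Group G] [Finite G]

theorem exists_relIndex_eq_pow (hG : IsPGroup p G) (H K : Subgroup G) :
    ∃ k, H.relIndex K = p ^ k :=
  (hG.to_subgroup K).index (H.subgroupOf K)

theorem le_relIndex_of_not_le (hG : IsPGroup p G) {H K : Subgroup G} (h : ¬ K ≤ H) :
    p ≤ H.relIndex K := by
  obtain ⟨k, hk⟩ := hG.exists_relIndex_eq_pow H K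
  rcases k with _ | k
  · exact absurd (relIndex_eq_one.mp hk) h
  · exact hk ▸ Nat.le_self_pow k.succ_ne_zero p

theorem sq_le_relIndex_of_not_prime (hG : IsPGroup p G) {H K : Subgroup G} (h : ¬ K ≤ H)
    (hK : ¬ (H.relIndex K).Prime) : p ^ 2 ≤ H.relIndex K := by
  obtain ⟨k, hk⟩ := hG.exists_relIndex_eq_pow H K
  rw [hk] at hK ⊢
  match k, hk with
  | 0, hk => exact absurd (relIndex_eq_one.mp hk) h
  | 1, _ => exact absurd (by simpa using Fact.out) hK
  | k + 2, _ => exact Nat.pow_le_pow_right (Fact.out : p.Prime).pos (by omega)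

theorem pow_le_relIndex_lcs (hG : IsPGroup p G) {A : Subgroup G} [A.Normal] {n : ℕ}
    (h : A.lcs n ≠ ⊥) : p ^ n ≤ (A.lcs n).relIndex A := by
  have := hG.isNilpotent
  induction n with
  | zero => simp
  | succ n ih =>
    have hn : A.lcs n ≠ ⊥ := fun h' => h (le_bot_iff.mp (h' ▸ A.lcs_antitone n.le_succ))
    have hstep : p ≤ (A.lcs (n + 1)).relIndex (A.lcs n) :=
      hG.le_relIndex_of_not_le fun hle => hn (eq_bot_of_le_commutator_top hle)
    calc p ^ (n + 1) = p ^ n * p := pow_succ p n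
      _ ≤ (A.lcs n).relIndex A * (A.lcs (n + 1)).relIndex (A.lcs n) :=
        Nat.mul_le_mul (ih hn) hstep
      _ = (A.lcs (n + 1)).relIndex A := by
        rw [mul_comm, relIndex_mul_relIndex _ _ _ (A.lcs_antitone n.le_succ) (A.lcs_le_self n)]

theorem pow_add_two_le_relIndex_lcs (hG : IsPGroup p G) {A : Subgroup G} [A.Normal] {m : ℕ}
    (h : A.lcs (m + 1) ≠ ⊥) (hprime : ¬ ((A.lcs 1).relIndex A).Prime) :
    p ^ (m + 2) ≤ (A.lcs (m + 1)).relIndex A := by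
  have := hG.isNilpotent
  have hA1 : ¬ A ≤ A.lcs 1 := fun hle =>
    h (le_bot_iff.mp (eq_bot_of_le_commutator_top hle ▸ A.lcs_le_self (m + 1)))
  have hm : (A.lcs 1).lcs m ≠ ⊥ := by rwa [lcs_lcs, Nat.add_comm]
  calc p ^ (m + 2) = p ^ m * p ^ 2 := pow_add p m 2
    _ ≤ ((A.lcs 1).lcs m).relIndex (A.lcs 1) * (A.lcs 1).relIndex A :=
      Nat.mul_le_mul (hG.pow_le_relIndex_lcs hm) (hG.sq_le_relIndex_of_not_prime hA1 hprime)
    _ = (A.lcs (m + 1)).relIndex A := by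
      rw [relIndex_mul_relIndex _ _ _ ((A.lcs 1).lcs_le_self m) (A.lcs_le_self 1), lcs_lcs,
        Nat.add_comm]

end IsPGroup

/-- Hall's lower bound: if `G` is a finite `p`-group with `G^(d+1) ≠ 1`, then
`|G^(d)/G^(d+1)| ≥ p^(2^d+1)`. -/
theorem hall_derived_quotient_bound {p : ℕ} (hp : p.Prime) {G : Type*} [Group G]
    [Finite G] (hG : IsPGroup p G) (d : ℕ) (hd : derivedSeries G (d + 1) ≠ ⊥) :
    p ^ (2 ^ d + 1) ≤ (derivedSeries G (d + 1)).relIndex (derivedSeries G d) := by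
  have := Fact.mk hp
  rw [derivedSeries_succ] at hd ⊢
  set N := derivedSeries G d
  set m := 2 ^ d - 1
  have hNm : N ≤ (⊤ : Subgroup G).lowerCentralSeries m :=
    derivedSeries_le_lowerCentralSeries_two_pow_sub_one G d
  have hexp : 2 ^ d + 1 = m + 2 := by
    have := Nat.one_le_two_pow (n := d)
    omega
  rw [hexp]
  by_cases hprime : ((N.lcs 1).relIndex N).Prime
  · have hE := commutator_le_lcs_of_relIndex_prime hNm hprime
    exact (hG.pow_le_relIndex_lcs (ne_bot_of_le_ne_bot hd hE)).trans
      (relIndex_le_of_le_left hE FiniteIndex.index_ne_zero)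
  · have hE := commutator_le_lcs hNm
    exact (hG.pow_add_two_le_relIndex_lcs (ne_bot_of_le_ne_bot hd hE) hprime).trans
      (relIndex_le_of_le_left hE FiniteIndex.index_ne_zero)
end

section
/- Let G be a finite p-group, d ≥ 0 with G^{(d+1)} ≠ 1 and |G^{(d)}/G^{(d+1)}| = p^{2^d+1} (a small derived quotient). Then the quotient G^{(d)}/[G^{(d)},G] has order at most p^2. -/
/-!
Put `K = G^(d)` and `K_j = [K, G, …, G]` (`j` copies of `G`). The three subgroups lemma gives
`[K_j, G^(i)] ≤ K_(j + 2^i)`, so `G^(d+1) = [K, G^(d)] ≤ K_(2^d)`. As `G` is nilpotent and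
`K_(2^d) ≠ 1`, the chain `K_1 > K_2 > ⋯ > K_(2^d)` is strictly decreasing, hence
`|K_1 : K_(2^d)| ≥ p^(2^d - 1)`, which leaves at most `p^2` for `|K : K_1|` inside
`|K : G^(d+1)| = p^(2^d + 1)`.
-/

/-- A derived quotient `G^(d)/G^(d+1)` is small if `G^(d+1) ≠ 1` and it has order `p^(2^d+1)`. -/
def IsSmallDerivedQuotient (p : ℕ) (G : Type*) [Group G] (d : ℕ) : Prop :=
  derivedSeries G (d + 1) ≠ ⊥ ∧
    (derivedSeries G (d + 1)).relIndex (derivedSeries G d) = p ^ (2 ^ d + 1)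

namespace Subgroup

variable {G : Type*} [Group G]

theorem commutator_commutator_le_sup (A B C : Subgroup G) [A.Normal] [B.Normal] [C.Normal] :
    ⁅⁅A, B⁆, C⁆ ≤ ⁅⁅B, C⁆, A⁆ ⊔ ⁅⁅C, A⁆, B⁆ := by
  set N := ⁅⁅B, C⁆, A⁆ ⊔ ⁅⁅C, A⁆, B⁆
  have : N.Normal := sup_normal _ _
  have hker : ∀ H : Subgroup G, H.map (QuotientGroup.mk' N) = ⊥ ↔ H ≤ N := fun H => by
    rw [map_eq_bot_iff, QuotientGroup.ker_mk']
  rw [← hker, map_commutator, map_commutator]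
  apply commutator_commutator_eq_bot_of_rotate
  · rw [← map_commutator, ← map_commutator, hker]
    exact le_sup_left
  · rw [← map_commutator, ← map_commutator, hker]
    exact le_sup_right

theorem eq_bot_of_commutator_top_eq_self [Group.IsNilpotent G] {N : Subgroup G}
    (h : ⁅N, ⊤⁆ = N) : N = ⊥ := by
  obtain ⟨n, hn⟩ := nilpotent_iff_lowerCentralSeries.mp ‹_›
  have hle : ∀ m, N ≤ lowerCentralSeries ⊤ m := by
    intro m
    induction m with
    | zero => simp [lowerCentralSeries_zero]
    | succ m ih => exact h ▸ commutator_mono ih le_rfl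
  exact le_bot_iff.mp (hn ▸ hle n)

theorem pow_dvd_relIndex_of_dvd_relIndex_succ {H : ℕ → Subgroup G} (hH : Antitone H) {p : ℕ} :
    ∀ k, (∀ j < k, p ∣ (H (j + 1)).relIndex (H j)) → p ^ k ∣ (H k).relIndex (H 0)
  | 0, _ => by simp
  | k + 1, hstep => by
    rw [← relIndex_mul_relIndex _ _ _ (hH k.le_succ) (hH k.zero_le), pow_succ']
    exact mul_dvd_mul (hstep k k.lt_succ_self)
      (pow_dvd_relIndex_of_dvd_relIndex_succ hH k fun j hj =>
        hstep j (hj.trans k.lt_succ_self))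

def lowerCentralSeriesFrom (K : Subgroup G) : ℕ → Subgroup G
  | 0 => K
  | j + 1 => ⁅lowerCentralSeriesFrom K j, ⊤⁆

variable (K : Subgroup G) [K.Normal]

instance lowerCentralSeriesFrom_normal : ∀ j, (lowerCentralSeriesFrom K j).Normal
  | 0 => ‹K.Normal›
  | j + 1 =>
    have := lowerCentralSeriesFrom_normal j
    commutator_normal _ _

theorem lowerCentralSeriesFrom_antitone : Antitone (lowerCentralSeriesFrom K) :=
  antitone_nat_of_succ_le fun j => commutator_le_left (lowerCentralSeriesFrom K j) ⊤

theorem commutator_lowerCentralSeriesFrom_derivedSeries_le (i j : ℕ) :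
    ⁅lowerCentralSeriesFrom K j, derivedSeries G i⁆ ≤ lowerCentralSeriesFrom K (j + 2 ^ i) := by
  induction i generalizing j with
  | zero => exact le_rfl
  | succ i ih =>
    set D := derivedSeries G i
    have hstep :
        ⁅⁅lowerCentralSeriesFrom K j, D⁆, D⁆ ≤ lowerCentralSeriesFrom K (j + 2 ^ (i + 1)) :=
      calc ⁅⁅lowerCentralSeriesFrom K j, D⁆, D⁆
          ≤ ⁅lowerCentralSeriesFrom K (j + 2 ^ i), D⁆ := commutator_mono (ih j) le_rfl
        _ ≤ lowerCentralSeriesFrom K (j + 2 ^ i + 2 ^ i) := ih (j + 2 ^ i)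
        _ = lowerCentralSeriesFrom K (j + 2 ^ (i + 1)) := by rw [pow_succ]; ring_nf
    rw [derivedSeries_succ, commutator_comm]
    refine (commutator_commutator_le_sup D D _).trans (sup_le ?_ hstep)
    rwa [commutator_comm D]

theorem lowerCentralSeriesFrom_not_le_succ [Group.IsNilpotent G] {j : ℕ}
    (h : lowerCentralSeriesFrom K j ≠ ⊥) :
    ¬lowerCentralSeriesFrom K j ≤ lowerCentralSeriesFrom K (j + 1) := fun hle =>
  h <| eq_bot_of_commutator_top_eq_self <|
    (lowerCentralSeriesFrom_antitone K j.le_succ).antisymm hle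

end Subgroup

open Subgroup

theorem IsPGroup.dvd_relIndex_of_not_le {p : ℕ} [Fact p.Prime] {G : Type*} [Group G]
    (hG : IsPGroup p G) {H K : Subgroup G} (h : ¬K ≤ H) : p ∣ H.relIndex K := by
  by_cases hfin : (H.subgroupOf K).FiniteIndex
  · obtain ⟨n, hn⟩ := (hG.to_subgroup K).index (H.subgroupOf K)
    have hn0 : n ≠ 0 := by
      rintro rfl
      exact h (relIndex_eq_one.mp (by rwa [pow_zero] at hn))
    rw [relIndex, hn]
    exact dvd_pow_self p hn0
  · rw [relIndex, not_finiteIndex_iff.mp hfin]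
    exact dvd_zero p

/-- If `G^(d)/G^(d+1)` is a small derived quotient of a finite `p`-group `G`, then
`G^(d)/[G^(d),G]` has order at most `p^2`. -/
theorem small_derived_quotient_central_quotient_le {p : ℕ} (hp : p.Prime) {G : Type*}
    [Group G] [Finite G] (hG : IsPGroup p G) (d : ℕ) (hsmall : IsSmallDerivedQuotient p G d) :
    (⁅derivedSeries G d, (⊤ : Subgroup G)⁆).relIndex (derivedSeries G d) ≤ p ^ 2 := by
  obtain ⟨hne, hidx⟩ := hsmall
  have : Fact p.Prime := ⟨hp⟩
  have : Group.IsNilpotent G := hG.isNilpotent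
  set K := derivedSeries G d
  set n := 2 ^ d
  let C := lowerCentralSeriesFrom K
  have hC : Antitone C := lowerCentralSeriesFrom_antitone K
  have hn : 1 ≤ n := Nat.one_le_two_pow
  have hD : derivedSeries G (d + 1) ≤ C n := by
    rw [derivedSeries_succ, ← zero_add n]
    exact commutator_lowerCentralSeriesFrom_derivedSeries_le K d 0
  have hstep : ∀ j < n - 1, p ∣ (C (j + 1 + 1)).relIndex (C (j + 1)) := by
    refine fun j hj => hG.dvd_relIndex_of_not_le (lowerCentralSeriesFrom_not_le_succ K ?_)
    exact fun hbot => hne (le_bot_iff.mp (hbot ▸ hD.trans (hC (by omega))))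
  have hpow : p ^ (n - 1) ∣ (C n).relIndex (C 1) := by
    have := pow_dvd_relIndex_of_dvd_relIndex_succ
      (fun _ _ h => hC (Nat.succ_le_succ h)) (n - 1) hstep
    simpa only [Nat.succ_eq_add_one, Nat.sub_add_cancel hn] using this
  have hdvd : p ^ (n - 1) * (C 1).relIndex K ∣ p ^ (n - 1) * p ^ 2 :=
    calc p ^ (n - 1) * (C 1).relIndex K
        ∣ (C n).relIndex (C 1) * (C 1).relIndex (C 0) := mul_dvd_mul_right hpow _
      _ = (C n).relIndex K := relIndex_mul_relIndex _ _ _ (hC hn) (hC (Nat.zero_le 1))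
      _ ∣ (derivedSeries G (d + 1)).relIndex K := relIndex_dvd_of_le_left _ hD
      _ = p ^ (n - 1) * p ^ 2 := by rw [hidx, ← pow_add]; congr 1; omega
  exact Nat.le_of_dvd (pow_pos hp.pos 2) (Nat.dvd_of_mul_dvd_mul_left (pow_pos hp.pos _) hdvd)
end

section
/- Let G be a finite p-group and let d ≥ 0 be such that G^{(d+1)} ≠ 1 and |G^{(d)}/G^{(d+1)}| = p^{2^d+1}. If G^{(d)}/[G^{(d)},G] is cyclic, then G^{(d+1)} equals the left-normed commutator [G^{(d)}, G, ..., G] with 2^d+1 copies of G, and each successive quotient in the chain G^{(d)} > [G^{(d)},G] > [G^{(d)},G,G] > ... > [G^{(d)}, G; 2^d+1] = G^{(d+1)} has order exactly p. -/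
instance commNormalSubgroupOf {G : Type*} [Group G] (d : ℕ) :
    ((⁅derivedSeries G d, (⊤ : Subgroup G)⁆).subgroupOf (derivedSeries G d)).Normal :=
  haveI : (⁅derivedSeries G d, (⊤ : Subgroup G)⁆).Normal :=
    haveI := derivedSeries_normal G d
    Subgroup.commutator_normal _ _
  Subgroup.normal_subgroupOf

namespace SmallDerivedAux

variable {G : Type*} [Group G]

/-- Three subgroups lemma, `≤ K` version. -/
theorem three_subgroups_le (A B C K : Subgroup G) [K.Normal]
    (h1 : ⁅⁅B, C⁆, A⁆ ≤ K) (h2 : ⁅⁅C, A⁆, B⁆ ≤ K) : ⁅⁅A, B⁆, C⁆ ≤ K := by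
  have key : ∀ H : Subgroup G, H ≤ K ↔ H.map (QuotientGroup.mk' K) = ⊥ := by
    intro H
    rw [Subgroup.map_eq_bot_iff, QuotientGroup.ker_mk']
  rw [key, Subgroup.map_commutator, Subgroup.map_commutator] at h1 h2 ⊢
  exact Subgroup.commutator_commutator_eq_bot_of_rotate h1 h2

theorem lnc_normal (A : Subgroup G) [hA : A.Normal] (k : ℕ) :
    (leftNormedComm A ⊤ k).Normal := by
  induction k with
  | zero => exact hA
  | succ n ih =>
    show (⁅leftNormedComm A ⊤ n, (⊤ : Subgroup G)⁆).Normal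
    exact @Subgroup.commutator_normal G _ _ _ ih inferInstance

theorem lnc_succ_le (A : Subgroup G) [A.Normal] (k : ℕ) :
    leftNormedComm A ⊤ (k + 1) ≤ leftNormedComm A ⊤ k := by
  haveI := lnc_normal A k
  exact Subgroup.commutator_le_left _ _

theorem lnc_antitone (A : Subgroup G) [A.Normal] {k l : ℕ} (h : k ≤ l) :
    leftNormedComm A ⊤ l ≤ leftNormedComm A ⊤ k := by
  induction l with
  | zero => simp_all
  | succ n ih =>
    rcases Nat.lt_or_ge k (n + 1) with h' | h'
    · exact (lnc_succ_le A n).trans (ih (Nat.lt_succ_iff.mp h'))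
    · have : k = n + 1 := le_antisymm h h'
      subst this
      exact le_rfl

theorem lnc_le_base (A : Subgroup G) [A.Normal] (k : ℕ) :
    leftNormedComm A ⊤ k ≤ A :=
  lnc_antitone A (Nat.zero_le k)

/-- Key claim: `⁅H i, G^(m)⁆ ≤ H (i + 2 ^ m)` where `H i` is the left-normed
commutator chain of a normal subgroup `A`. -/
theorem lnc_commutator_derived (A : Subgroup G) [A.Normal] (m : ℕ) :
    ∀ i : ℕ, ⁅leftNormedComm A ⊤ i, derivedSeries G m⁆ ≤ leftNormedComm A ⊤ (i + 2 ^ m) := by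
  induction m with
  | zero =>
    intro i
    rw [derivedSeries_zero, pow_zero]
    exact le_rfl
  | succ m ih =>
    intro i
    haveI := lnc_normal A (i + 2 ^ (m + 1))
    rw [derivedSeries_succ, Subgroup.commutator_comm]
    refine three_subgroups_le _ _ _ _ ?_ ?_
    · refine le_trans (Subgroup.commutator_mono (le_of_eq (Subgroup.commutator_comm _ _)) le_rfl) ?_
      refine le_trans (Subgroup.commutator_mono (ih i) le_rfl) ?_
      refine le_trans (ih (i + 2 ^ m)) ?_
      have : i + 2 ^ m + 2 ^ m = i + 2 ^ (m + 1) := by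
        rw [pow_succ]; omega
      rw [this]
    · refine le_trans (Subgroup.commutator_mono (ih i) le_rfl) ?_
      refine le_trans (ih (i + 2 ^ m)) ?_
      have : i + 2 ^ m + 2 ^ m = i + 2 ^ (m + 1) := by
        rw [pow_succ]; omega
      rw [this]

/-- Decomposition coming from cyclicity of `N/[N,G]`. -/
theorem decomp (N : Subgroup G) [N.Normal]
    (hnorm : ((⁅N, (⊤ : Subgroup G)⁆).subgroupOf N).Normal)
    (hcyc : IsCyclic (N ⧸ ((⁅N, (⊤ : Subgroup G)⁆).subgroupOf N))) :
    ∃ x : G, x ∈ N ∧ ∀ n ∈ N, ∃ (a : ℤ) (h : G), h ∈ ⁅N, (⊤ : Subgroup G)⁆ ∧ n = x ^ a * h := by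
  obtain ⟨g, hg⟩ := hcyc.exists_generator
  obtain ⟨x₀, hx₀⟩ := QuotientGroup.mk'_surjective ((⁅N, (⊤ : Subgroup G)⁆).subgroupOf N) g
  refine ⟨(x₀ : G), x₀.2, ?_⟩
  intro n hn
  obtain ⟨a, ha⟩ := Subgroup.mem_zpowers_iff.mp (hg (QuotientGroup.mk' _ ⟨n, hn⟩))
  have heq : QuotientGroup.mk' ((⁅N, (⊤ : Subgroup G)⁆).subgroupOf N) (x₀ ^ a)
      = QuotientGroup.mk' _ (⟨n, hn⟩ : N) := by
    rw [map_zpow, hx₀, ha]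
  obtain ⟨z, hz, hzeq⟩ := (QuotientGroup.mk'_eq_mk' _).mp heq
  refine ⟨a, (z : G), Subgroup.mem_subgroupOf.mp hz, ?_⟩
  have : ((x₀ ^ a * z : N) : G) = n := by rw [hzeq]
  simpa using this.symm

open scoped commutatorElement in
theorem derived_le_lnc (d : ℕ)
    (hcyc : IsCyclic
      ((derivedSeries G d) ⧸
        ((⁅derivedSeries G d, (⊤ : Subgroup G)⁆).subgroupOf (derivedSeries G d)))) :
    derivedSeries G (d + 1) ≤ leftNormedComm (derivedSeries G d) ⊤ (2 ^ d + 1) := by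
  haveI := derivedSeries_normal G d
  set N : Subgroup G := derivedSeries G d with hN
  set c : ℕ := 2 ^ d + 1 with hc
  set K : Subgroup G := leftNormedComm N ⊤ c with hK
  haveI hKn : K.Normal := lnc_normal N c
  -- key : ⁅N, ⁅N,⊤⁆⁆ ≤ K
  have key : ⁅N, ⁅N, (⊤ : Subgroup G)⁆⁆ ≤ K := by
    rw [Subgroup.commutator_comm]
    have h1 : ⁅N, (⊤ : Subgroup G)⁆ = leftNormedComm N ⊤ 1 := rfl
    have h2 := lnc_commutator_derived N d 1
    rw [← hN] at h2
    rw [h1, hK, hc]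
    have : 1 + 2 ^ d = 2 ^ d + 1 := by omega
    rw [← this]
    exact h2
  have keyH1H1 : ⁅⁅N, (⊤ : Subgroup G)⁆, ⁅N, (⊤ : Subgroup G)⁆⁆ ≤ K := by
    refine le_trans (Subgroup.commutator_mono ?_ le_rfl) key
    exact Subgroup.commutator_le_left _ _
  obtain ⟨x, hxN, hdec⟩ := decomp N (by rw [hN]; infer_instance) hcyc
  rw [derivedSeries_succ, ← hN]
  rw [Subgroup.commutator_le]
  intro m hm n hn
  obtain ⟨a, h, hh, rfl⟩ := hdec m hm
  obtain ⟨b, h', hh', rfl⟩ := hdec n hn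
  -- pass to the quotient G ⧸ K
  rw [← QuotientGroup.ker_mk' K, MonoidHom.mem_ker, map_commutatorElement,
    commutatorElement_eq_one_iff_commute, map_mul, map_mul, map_zpow, map_zpow]
  set π := QuotientGroup.mk' K with hπ
  have mem_comm : ∀ u v : G, ⁅u, v⁆ ∈ K → Commute (π u) (π v) := by
    intro u v huv
    rw [← commutatorElement_eq_one_iff_commute, ← map_commutatorElement,
      ← MonoidHom.mem_ker, QuotientGroup.ker_mk']
    exact huv
  have cxh' : Commute (π x) (π h') :=
    mem_comm _ _ (key (Subgroup.commutator_mem_commutator hxN hh'))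
  have cxh : Commute (π x) (π h) :=
    mem_comm _ _ (key (Subgroup.commutator_mem_commutator hxN hh))
  have chh' : Commute (π h) (π h') :=
    mem_comm _ _ (keyH1H1 (Subgroup.commutator_mem_commutator hh hh'))
  have A1 : Commute (π x ^ a) (π x ^ b * π h') :=
    ((Commute.refl (π x)).zpow_zpow a b).mul_right (cxh'.zpow_left a)
  have A2 : Commute (π h) (π x ^ b * π h') :=
    (cxh.symm.zpow_right b).mul_right chh'
  exact A1.mul_left A2

end SmallDerivedAux

/-- If `G^(d)/G^(d+1)` is a small derived quotient of a finite `p`-group `G` and the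
quotient `G^(d)/[G^(d),G]` is cyclic, then `G^(d+1) = [G^(d), G; 2^d+1]` (left-normed,
with `2^d+1` copies of `G`), and each successive quotient of the chain
`G^(d) > [G^(d),G] > ⋯ > [G^(d), G; 2^d+1] = G^(d+1)` has order exactly `p`. -/
theorem small_derived_quotient_cyclic_chain {p : ℕ} (hp : p.Prime) {G : Type*}
    [Group G] [Finite G] (hG : IsPGroup p G) (d : ℕ)
    (hsmall : IsSmallDerivedQuotient p G d)
    (hcyc : IsCyclic
      ((derivedSeries G d) ⧸
        ((⁅derivedSeries G d, (⊤ : Subgroup G)⁆).subgroupOf (derivedSeries G d)))) :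
    derivedSeries G (d + 1) = leftNormedComm (derivedSeries G d) ⊤ (2 ^ d + 1) ∧
      ∀ k < 2 ^ d + 1,
        (leftNormedComm (derivedSeries G d) (⊤ : Subgroup G) (k + 1)).relIndex
          (leftNormedComm (derivedSeries G d) (⊤ : Subgroup G) k) = p := by
  classical
  haveI : Fact p.Prime := ⟨hp⟩
  haveI := derivedSeries_normal G d
  set N : Subgroup G := derivedSeries G d with hN
  set c : ℕ := 2 ^ d + 1 with hc
  set H : ℕ → Subgroup G := leftNormedComm N ⊤ with hHdef
  have H0 : H 0 = N := rfl
  have Hsucc : ∀ k, H (k + 1) = ⁅H k, (⊤ : Subgroup G)⁆ := fun k => rfl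
  have DleH : derivedSeries G (d + 1) ≤ H c := SmallDerivedAux.derived_le_lnc d hcyc
  -- a term of the chain equal to its own commutator with ⊤ is trivial
  have hbot : ∀ k, H k ≤ ⁅H k, (⊤ : Subgroup G)⁆ → H k = ⊥ := by
    intro k hk
    have hle : ∀ n, H k ≤ lowerCentralSeries (⊤ : Subgroup G) n := by
      intro n
      induction n with
      | zero => exact le_top
      | succ n ih =>
        show H k ≤ ⁅lowerCentralSeries (⊤ : Subgroup G) n, (⊤ : Subgroup G)⁆
        exact hk.trans (Subgroup.commutator_mono ih le_rfl)
    have hnil : Group.IsNilpotent G := hG.isNilpotent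
    obtain ⟨n, hn⟩ := nilpotent_iff_lowerCentralSeries.mp hnil
    exact le_bot_iff.mp (hn ▸ hle n)
  -- strictness of the chain below c
  have strict : ∀ k, k < c → ¬ (H k ≤ H (k + 1)) := by
    intro k hkc hcontra
    have hkbot : H k = ⊥ := hbot k (by rw [← Hsucc k]; exact hcontra)
    apply hsmall.1
    rw [le_bot_iff.mp (le_trans DleH (le_trans
      (SmallDerivedAux.lnc_antitone N hkc.le) hkbot.le))]
  -- every relative index in the chain is a power of p
  have rdvd : ∀ k : ℕ, ∃ a : ℕ, (H (k + 1)).relIndex (H k) = p ^ a := by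
    intro k
    have h1 : (H (k + 1)).relIndex (H k) ∣ Nat.card (H k) :=
      Subgroup.index_dvd_card _
    obtain ⟨m, hm⟩ := IsPGroup.iff_card.mp (hG.to_subgroup (H k))
    rw [hm] at h1
    obtain ⟨a, _, ha⟩ := (Nat.dvd_prime_pow hp).mp h1
    exact ⟨a, ha⟩
  have rdvd' : ∃ a : ℕ, (derivedSeries G (d + 1)).relIndex (H c) = p ^ a := by
    have h1 : (derivedSeries G (d + 1)).relIndex (H c) ∣ Nat.card (H c) :=
      Subgroup.index_dvd_card _
    obtain ⟨m, hm⟩ := IsPGroup.iff_card.mp (hG.to_subgroup (H c))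
    rw [hm] at h1
    obtain ⟨a, _, ha⟩ := (Nat.dvd_prime_pow hp).mp h1
    exact ⟨a, ha⟩
  -- the relindex tower
  have tower : ∀ n : ℕ, (H n).relIndex N =
      ∏ k ∈ Finset.range n, (H (k + 1)).relIndex (H k) := by
    intro n
    induction n with
    | zero => rw [Finset.range_zero, Finset.prod_empty, H0, Subgroup.relIndex_self]
    | succ n ih =>
      have hmul := Subgroup.relIndex_mul_relIndex (H (n + 1)) (H n) N
        (SmallDerivedAux.lnc_succ_le N n) (SmallDerivedAux.lnc_le_base N n)
      rw [Finset.prod_range_succ, ← ih, ← hmul, mul_comm]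
  have htot : (derivedSeries G (d + 1)).relIndex (H c) * (H c).relIndex N = p ^ c := by
    rw [Subgroup.relIndex_mul_relIndex (derivedSeries G (d + 1)) (H c) N DleH
      (SmallDerivedAux.lnc_le_base N c)]
    exact hsmall.2
  -- exponents
  choose a ha using rdvd
  obtain ⟨a', ha'⟩ := rdvd'
  have hsum : a' + ∑ k ∈ Finset.range c, a k = c := by
    have := htot
    rw [ha', tower c] at this
    have hprod : ∏ k ∈ Finset.range c, (H (k + 1)).relIndex (H k)
        = p ^ (∑ k ∈ Finset.range c, a k) := by
      rw [← Finset.prod_pow_eq_pow_sum]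
      exact Finset.prod_congr rfl fun k _ => ha k
    rw [hprod, ← pow_add] at this
    exact Nat.pow_right_injective hp.two_le this
  have hone : ∀ k ∈ Finset.range c, 1 ≤ a k := by
    intro k hk
    rw [Finset.mem_range] at hk
    by_contra hcon
    have hak : a k = 0 := by omega
    have : (H (k + 1)).relIndex (H k) = 1 := by rw [ha k, hak, pow_zero]
    exact strict k hk (Subgroup.relIndex_eq_one.mp this)
  have hsumge : c ≤ ∑ k ∈ Finset.range c, a k := by
    calc c = ∑ _k ∈ Finset.range c, 1 := by
          rw [Finset.sum_const, Finset.card_range, smul_eq_mul, mul_one]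
      _ ≤ ∑ k ∈ Finset.range c, a k := Finset.sum_le_sum hone
  have ha'0 : a' = 0 := by omega
  have hsumeq : ∑ k ∈ Finset.range c, a k = c := by omega
  have hallone : ∀ k ∈ Finset.range c, a k = 1 := by
    by_contra hcon
    push_neg at hcon
    obtain ⟨j, hj, hjne⟩ := hcon
    have : (∑ _k ∈ Finset.range c, 1) < ∑ k ∈ Finset.range c, a k :=
      Finset.sum_lt_sum hone ⟨j, hj, by have := hone j hj; omega⟩
    rw [Finset.sum_const, Finset.card_range, smul_eq_mul, mul_one] at this
    omega
  constructor
  · have : (derivedSeries G (d + 1)).relIndex (H c) = 1 := by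
      rw [ha', ha'0, pow_zero]
    exact le_antisymm DleH (Subgroup.relIndex_eq_one.mp this)
  · intro k hk
    have hk' : k ∈ Finset.range c := Finset.mem_range.mpr hk
    rw [ha k, hallone k hk', pow_one]
end

section
/- Let G be a finite p-group, d ≥ 0, and suppose G^{(d+1)} ≤ γ_{2^{d+1}+1}(G). Then for all e ≥ 1, G^{(d+e)} ≤ γ_{2^{d+e} + 2^{e-1}}(G). -/
/-!
Write `γ_i` for `lowerCentralSeries (i - 1)`. By the three subgroups lemma `⁅γ_i, γ_j⁆ ≤ γ_{i+j}`,
so `G^(n) ≤ γ_i` implies `G^(n+1) = ⁅G^(n), G^(n)⁆ ≤ γ_{2i}`. Starting from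
`G^(d+1) ≤ γ_{2^(d+1)+1}`, each further derived step doubles the index `2^(d+e) + 2^(e-1)`.
-/

namespace Subgroup

variable {G : Type*} [Group G]

theorem commutator_lowerCentralSeries_le (m n : ℕ) :
    ⁅(⊤ : Subgroup G).lowerCentralSeries m, (⊤ : Subgroup G).lowerCentralSeries n⁆ ≤
      (⊤ : Subgroup G).lowerCentralSeries (m + n + 1) := by
  induction n generalizing m with
  | zero => rfl
  | succ n ih =>
    rw [lowerCentralSeries_succ, commutator_comm]
    apply commutator_commutator_le_of_rotate
    · rw [commutator_comm ⊤, ← lowerCentralSeries_succ]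
      exact (ih (m + 1)).trans_eq (by rw [Nat.add_right_comm m 1 n, ← Nat.add_assoc])
    · exact commutator_mono (ih m) le_rfl

theorem derivedSeries_succ_le_lowerCentralSeries {n k : ℕ}
    (h : derivedSeries G n ≤ (⊤ : Subgroup G).lowerCentralSeries k) :
    derivedSeries G (n + 1) ≤ (⊤ : Subgroup G).lowerCentralSeries (k + k + 1) :=
  (commutator_mono h h).trans (commutator_lowerCentralSeries_le k k)

end Subgroup

theorem derivedSeries_le_lowerCentralSeries_of_le_general {G : Type*}
    [Group G] (d : ℕ)
    (h : derivedSeries G (d + 1) ≤ (⊤ : Subgroup G).lowerCentralSeries (2 ^ (d + 1))) :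
    ∀ e : ℕ, 1 ≤ e →
      derivedSeries G (d + e) ≤ (⊤ : Subgroup G).lowerCentralSeries (2 ^ (d + e) + 2 ^ (e - 1) - 1) := by
  intro e he
  induction e, he using Nat.le_induction with
  | base => simpa using h
  | succ e he ih =>
    have hindex : 2 ^ (d + e) + 2 ^ (e - 1) - 1 + (2 ^ (d + e) + 2 ^ (e - 1) - 1) + 1 =
        2 ^ (d + (e + 1)) + 2 ^ (e + 1 - 1) - 1 := by
      obtain ⟨e, rfl⟩ := Nat.exists_eq_add_of_le' he
      have : 1 ≤ 2 ^ e := Nat.one_le_two_pow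
      simp only [Nat.add_sub_cancel, ← add_assoc, pow_succ]
      omega
    exact hindex ▸ Subgroup.derivedSeries_succ_le_lowerCentralSeries ih

/-- If `G^(d+1) ≤ γ_{2^(d+1)+1}(G)` in a finite `p`-group `G`, then for all `e ≥ 1`,
`G^(d+e) ≤ γ_{2^(d+e)+2^(e-1)}(G)`, where `γ_i(G) = lowerCentralSeries G (i-1)`. -/
theorem derivedSeries_le_lowerCentralSeries_of_le {p : ℕ} (hp : p.Prime) {G : Type*}
    [Group G] [Finite G] (hG : IsPGroup p G) (d : ℕ)
    (h : derivedSeries G (d + 1) ≤ (⊤ : Subgroup G).lowerCentralSeries (2 ^ (d + 1))) :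
    ∀ e : ℕ, 1 ≤ e →
      derivedSeries G (d + e) ≤ (⊤ : Subgroup G).lowerCentralSeries (2 ^ (d + e) + 2 ^ (e - 1) - 1) :=
  derivedSeries_le_lowerCentralSeries_of_le_general d h
end
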